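/- arXiv:2009.04257 — 2 statements merged into one kernel-verified Lean document; each statement's English description precedes it below -/
import Mathlib

section
/- Let g : [0,∞) → [0,∞) be nondecreasing, set G(t) := ∫₀ᵗ g(s) ds, and suppose there are constants 1 < g₀ ≤ g⁰ with g₀ ≤ t·g(t)/G(t) ≤ g⁰ for all t > 0. Then for every nonempty bounded family (t_i)_{i ∈ I} of nonnegative real numbers, g( sup_{i ∈ I} t_i ) ≤ (g⁰/g₀)·2^{g⁰ − 1}·sup_{i ∈ I} g(t_i). -/
open MeasureTheory Set Filter

/-!
Write `T = sup tᵢ` and `S = sup g(tᵢ)`. The lower structure condition gives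
`g₀ G(tᵢ) ≤ tᵢ g(tᵢ) ≤ T S` for every `i`, and since `G` is continuous (a primitive) and
`T` lies in the closure of `{tᵢ}`, also `g₀ G(T) ≤ T S`. The upper structure condition at `T`
then gives `g₀ T g(T) ≤ g⁰ g₀ G(T) ≤ g⁰ T S`, i.e. `g(T) ≤ (g⁰/g₀) S`; the factor
`2^(g⁰ - 1) ≥ 1` is slack.
-/

theorem ContinuousWithinAt.apply_ciSup_le {α β ι : Type*} [ConditionallyCompleteLinearOrder α]
    [TopologicalSpace α] [OrderTopology α] [LinearOrder β] [TopologicalSpace β]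
    [OrderClosedTopology β] [Nonempty ι] {f : α → β} {t : ι → α} (hbd : BddAbove (range t))
    (hf : ContinuousWithinAt f (range t) (⨆ i, t i)) {c : β} (hc : ∀ i, f (t i) ≤ c) :
    f (⨆ i, t i) ≤ c :=
  hf.closure_le (csSup_mem_closure (range_nonempty t) hbd) continuousWithinAt_const
    (forall_mem_range.2 hc)

theorem MonotoneOn.bddAbove_range_comp {α β ι : Type*} [LinearOrder α] [Preorder β]
    {f : α → β} {a : α} (hf : MonotoneOn f (Ici a)) {t : ι → α} (ht : ∀ i, a ≤ t i)
    (hbd : BddAbove (range t)) : BddAbove (range fun i => f (t i)) := by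
  obtain ⟨b, hb⟩ := hbd
  refine ⟨f (max a b), forall_mem_range.2 fun i => hf (ht i) (le_max_left a b) ?_⟩
  exact (hb (mem_range_self i)).trans (le_max_right a b)

section StructureCondition

variable {g G : ℝ → ℝ} {g₀ : ℝ}

theorem structure_lower_of_nonneg (hGdef : ∀ t : ℝ, 0 ≤ t → G t = ∫ s in Ioc (0:ℝ) t, g s)
    (hSC : ∀ t : ℝ, 0 < t → g₀ * G t ≤ t * g t) {t : ℝ} (ht : 0 ≤ t) :
    g₀ * G t ≤ t * g t := by
  rcases ht.eq_or_lt with rfl | ht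
  · simp [hGdef 0 le_rfl]
  · exact hSC t ht

theorem mul_apply_ciSup_le_ciSup_mul_ciSup (hg_mono : MonotoneOn g (Ici 0))
    (hg_nonneg : ∀ t : ℝ, 0 ≤ t → 0 ≤ g t)
    (hGdef : ∀ t : ℝ, 0 ≤ t → G t = ∫ s in Ioc (0:ℝ) t, g s)
    (hSC : ∀ t : ℝ, 0 < t → g₀ * G t ≤ t * g t)
    {ι : Type*} [Nonempty ι] {t : ι → ℝ} (ht0 : ∀ i, 0 ≤ t i) (hbd : BddAbove (range t)) :
    g₀ * G (⨆ i, t i) ≤ (⨆ i, t i) * ⨆ i, g (t i) := by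
  set T := ⨆ i, t i
  have ht_mem : ∀ i, t i ∈ Icc 0 T := fun i => ⟨ht0 i, le_ciSup hbd i⟩
  have hT : T ∈ Icc 0 T := ⟨(ht_mem (Classical.arbitrary ι)).1.trans (ht_mem _).2, le_rfl⟩
  have hbd_g := hg_mono.bddAbove_range_comp ht0 hbd
  have hG_cont : ContinuousOn G (Icc 0 T) := by
    refine (intervalIntegral.continuousOn_primitive ?_).congr fun x hx => hGdef x hx.1
    exact (hg_mono.mono Icc_subset_Ici_self).integrableOn_isCompact isCompact_Icc
  refine ContinuousWithinAt.apply_ciSup_le (f := fun x => g₀ * G x) hbd ?_ fun i => ?_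
  · exact ((hG_cont T hT).mono (range_subset_iff.2 ht_mem)).const_mul g₀
  · calc g₀ * G (t i) ≤ t i * g (t i) := structure_lower_of_nonneg hGdef hSC (ht0 i)
      _ ≤ T * ⨆ i, g (t i) :=
        mul_le_mul (ht_mem i).2 (le_ciSup hbd_g i) (hg_nonneg _ (ht0 i)) hT.1

theorem apply_ciSup_le_div_mul_ciSup {gu : ℝ} (hg_mono : MonotoneOn g (Ici 0))
    (hg_nonneg : ∀ t : ℝ, 0 ≤ t → 0 ≤ g t)
    (hGdef : ∀ t : ℝ, 0 ≤ t → G t = ∫ s in Ioc (0:ℝ) t, g s) (hg₀ : 0 < g₀) (hgu : g₀ ≤ gu)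
    (hSC_lower : ∀ t : ℝ, 0 < t → g₀ * G t ≤ t * g t)
    (hSC_upper : ∀ t : ℝ, 0 < t → t * g t ≤ gu * G t)
    {ι : Type*} [Nonempty ι] {t : ι → ℝ} (ht0 : ∀ i, 0 ≤ t i) (hbd : BddAbove (range t)) :
    g (⨆ i, t i) ≤ gu / g₀ * ⨆ i, g (t i) := by
  set T := ⨆ i, t i
  set S := ⨆ i, g (t i)
  rw [div_mul_eq_mul_div, le_div_iff₀ hg₀]
  obtain ⟨i₀⟩ := ‹Nonempty ι›
  rcases ((ht0 i₀).trans (le_ciSup hbd i₀)).eq_or_lt with hT | hT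
  · have hti₀ : t i₀ = T := by linarith [le_ciSup hbd i₀, ht0 i₀]
    have hS : g T ≤ S := hti₀ ▸ le_ciSup (hg_mono.bddAbove_range_comp ht0 hbd) i₀
    nlinarith [hg_nonneg T hT.le]
  · have hG := mul_apply_ciSup_le_ciSup_mul_ciSup hg_mono hg_nonneg hGdef hSC_lower ht0 hbd
    refine le_of_mul_le_mul_left ?_ hT
    calc T * (g T * g₀) = g₀ * (T * g T) := by ring
      _ ≤ g₀ * (gu * G T) := mul_le_mul_of_nonneg_left (hSC_upper T hT) hg₀.le
      _ = gu * (g₀ * G T) := by ring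
      _ ≤ gu * (T * S) := mul_le_mul_of_nonneg_left hG (hg₀.le.trans hgu)
      _ = T * (gu * S) := by ring

end StructureCondition

/-- **Lemma 5.9** (for an Orlicz function `G` with right derivative `g` satisfying the
structure condition `g₀ ≤ t·g(t)/G(t) ≤ g⁰`, `g` applied to a supremum of a bounded family
of nonnegative reals is controlled by the supremum of the values of `g`). -/
theorem g_sup_le_const_mul_sup_g (g G : ℝ → ℝ) (g₀ gu : ℝ)
    (hg_mono : MonotoneOn g (Set.Ici 0)) (hg_nonneg : ∀ t : ℝ, 0 ≤ t → 0 ≤ g t)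
    (hGdef : ∀ t : ℝ, 0 ≤ t → G t = ∫ s in Set.Ioc (0:ℝ) t, g s)
    (hg₀ : 1 < g₀) (hgu : g₀ ≤ gu)
    (hSC : ∀ t : ℝ, 0 < t → g₀ * G t ≤ t * g t ∧ t * g t ≤ gu * G t)
    {ι : Type*} [Nonempty ι] (t : ι → ℝ) (ht0 : ∀ i, 0 ≤ t i)
    (hbd : BddAbove (Set.range t)) :
    g (⨆ i, t i) ≤ (gu / g₀) * 2 ^ (gu - 1) * ⨆ i, g (t i) := by
  have hS : 0 ≤ ⨆ i, g (t i) :=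
    Real.iSup_nonneg fun i => hg_nonneg _ (ht0 i)
  have hgu0 : 0 ≤ gu / g₀ := div_nonneg (by linarith) (by linarith)
  calc g (⨆ i, t i) ≤ gu / g₀ * ⨆ i, g (t i) :=
        apply_ciSup_le_div_mul_ciSup hg_mono hg_nonneg hGdef (by linarith) hgu
          (fun t ht => (hSC t ht).1) (fun t ht => (hSC t ht).2) ht0 hbd
    _ ≤ gu / g₀ * 2 ^ (gu - 1) * ⨆ i, g (t i) := by
        gcongr
        exact le_mul_of_one_le_right hgu0 (Real.one_le_rpow one_le_two (by linarith))
end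

section
/- Let Ω ⊆ ℝⁿ be a bounded open set and let G be a generalized Φ-function on Ω satisfying (SC) with constants 1 < g₀ ≤ g⁰ and (A0) with constant c₀. Let (u_i) be a sequence in L^{G(·)}(Ω) with sup_i ‖u_i‖_{G(·)} < ∞, and suppose u_i → u almost everywhere in Ω. Then u ∈ L^{G(·)}(Ω) and u_i converges to u weakly in L^{G(·)}(Ω); in particular, for every v ∈ L^{G*(·)}(Ω) one has ∫_Ω u_i(x)·v(x) dx → ∫_Ω u(x)·v(x) dx. -/
open MeasureTheory Metric Set Filter
open scoped RealInnerProductSpace ENNReal Topology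

noncomputable section

/-- `G` is a generalized Φ-function on `Ω ⊆ ℝⁿ`, with `g x` the right-hand derivative of
`G x`: `G (·,t)` is measurable for each `t`, and for a.e. `x ∈ Ω` the function `g x` is
nonnegative and nondecreasing on `[0,∞)`, `G x t = ∫₀ᵗ g x s ds` (hence `G x` is increasing,
convex and `G x 0 = lim_{t→0⁺} G x t = 0`), and `G x t → ∞` as `t → ∞`. -/
structure IsGPhi {n : ℕ} (Ω : Set (EuclideanSpace ℝ (Fin n)))
    (G g : EuclideanSpace ℝ (Fin n) → ℝ → ℝ) : Prop where
  meas : ∀ t : ℝ, Measurable fun x => G x t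
  ae_prop : ∀ᵐ x ∂volume, x ∈ Ω →
    (∀ t : ℝ, 0 ≤ t → 0 ≤ g x t) ∧
    (∀ s t : ℝ, 0 ≤ s → s ≤ t → g x s ≤ g x t) ∧
    (∀ t : ℝ, 0 ≤ t → G x t = ∫ s in Set.Ioc (0:ℝ) t, g x s) ∧
    Filter.Tendsto (fun t => G x t) Filter.atTop Filter.atTop

/-- The structure condition (SC): `p ≤ t·g(x,t)/G(x,t) ≤ q` for a.e. `x ∈ Ω`, all `t > 0`. -/
def SCcond {n : ℕ} (Ω : Set (EuclideanSpace ℝ (Fin n)))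
    (G g : EuclideanSpace ℝ (Fin n) → ℝ → ℝ) (p q : ℝ) : Prop :=
  ∀ᵐ x ∂volume, x ∈ Ω → ∀ t : ℝ, 0 < t →
    p * G x t ≤ t * g x t ∧ t * g x t ≤ q * G x t

/-- Condition (A0): `1/c₀ ≤ G(x,1) ≤ c₀` for a.e. `x ∈ Ω`. -/
def A0cond {n : ℕ} (Ω : Set (EuclideanSpace ℝ (Fin n)))
    (G : EuclideanSpace ℝ (Fin n) → ℝ → ℝ) (c₀ : ℝ) : Prop :=
  ∀ᵐ x ∂volume, x ∈ Ω → c₀⁻¹ ≤ G x 1 ∧ G x 1 ≤ c₀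

/-- Condition (A_{1,s}): `G(x,t) ≤ C_A G(y,t)` for all `x,y` in a ball of radius `R < 1`
intersected with `Ω` and all `t ≥ 0` with `t^s ∈ [1, R^{-n}]`. -/
def A1scond {n : ℕ} (Ω : Set (EuclideanSpace ℝ (Fin n)))
    (G : EuclideanSpace ℝ (Fin n) → ℝ → ℝ) (s C_A : ℝ) : Prop :=
  ∀ (z : EuclideanSpace ℝ (Fin n)) (R : ℝ), 0 < R → R < 1 →
    ∀ x ∈ Metric.ball z R ∩ Ω, ∀ y ∈ Metric.ball z R ∩ Ω, ∀ t : ℝ, 0 ≤ t →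
      1 ≤ t ^ s → t ^ s ≤ R ^ (-(n : ℝ)) → G x t ≤ C_A * G y t

/-- Condition (A₁): `G(x,t) ≤ C_A G(y,t)` for all `x,y` in a ball of radius `R < 1`
intersected with `Ω` and all `t ≥ 0` with `inf_{B∩Ω} G(·,t) ∈ [1, R^{-n}]`. -/
def A1cond {n : ℕ} (Ω : Set (EuclideanSpace ℝ (Fin n)))
    (G : EuclideanSpace ℝ (Fin n) → ℝ → ℝ) (C_A : ℝ) : Prop :=
  ∀ (z : EuclideanSpace ℝ (Fin n)) (R : ℝ), 0 < R → R < 1 →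
    ∀ x ∈ Metric.ball z R ∩ Ω, ∀ y ∈ Metric.ball z R ∩ Ω, ∀ t : ℝ, 0 ≤ t →
      1 ≤ sInf ((fun w => G w t) '' (Metric.ball z R ∩ Ω)) →
      sInf ((fun w => G w t) '' (Metric.ball z R ∩ Ω)) ≤ R ^ (-(n : ℝ)) →
      G x t ≤ C_A * G y t

/-- The structure conditions on the Carathéodory vector field `A`. -/
structure StructCond {n : ℕ} (Ω : Set (EuclideanSpace ℝ (Fin n)))
    (g : EuclideanSpace ℝ (Fin n) → ℝ → ℝ)
    (A : EuclideanSpace ℝ (Fin n) → EuclideanSpace ℝ (Fin n) → EuclideanSpace ℝ (Fin n))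
    (c₁ c₂ : ℝ) : Prop where
  meas : ∀ ξ, Measurable fun x => A x ξ
  cont : ∀ᵐ x ∂volume, x ∈ Ω → Continuous fun ξ => A x ξ
  coercive : ∀ᵐ x ∂volume, x ∈ Ω → ∀ ξ, c₁ * (g x ‖ξ‖ * ‖ξ‖) ≤ (inner ℝ (A x ξ) ξ : ℝ)
  growth : ∀ᵐ x ∂volume, x ∈ Ω → ∀ ξ, ‖A x ξ‖ ≤ c₂ * g x ‖ξ‖
  strictMono : ∀ᵐ x ∂volume, x ∈ Ω → ∀ ξ₁ ξ₂, ξ₁ ≠ ξ₂ →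
    0 < (inner ℝ (A x ξ₁ - A x ξ₂) (ξ₁ - ξ₂) : ℝ)

/-- Smooth test functions compactly supported in `Ω`. -/
def IsTest {n : ℕ} (Ω : Set (EuclideanSpace ℝ (Fin n)))
    (φ : EuclideanSpace ℝ (Fin n) → ℝ) : Prop :=
  ContDiff ℝ (⊤ : ℕ∞) φ ∧ HasCompactSupport φ ∧ tsupport φ ⊆ Ω

/-- `du` is the distributional gradient of `u` on `Ω`. -/
def IsWeakGrad {n : ℕ} (Ω : Set (EuclideanSpace ℝ (Fin n)))
    (u : EuclideanSpace ℝ (Fin n) → ℝ)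
    (du : EuclideanSpace ℝ (Fin n) → EuclideanSpace ℝ (Fin n)) : Prop :=
  ∀ φ : EuclideanSpace ℝ (Fin n) → ℝ, IsTest Ω φ →
    ∫ x in Ω, u x • gradient φ x = -∫ x in Ω, φ x • du x

/-- Membership in the generalized Orlicz space `L^{G(·)}(Ω)`. -/
def MemLG {n : ℕ} (Ω : Set (EuclideanSpace ℝ (Fin n)))
    (G : EuclideanSpace ℝ (Fin n) → ℝ → ℝ) (u : EuclideanSpace ℝ (Fin n) → ℝ) : Prop :=
  AEMeasurable u (volume.restrict Ω) ∧ IntegrableOn (fun x => G x |u x|) Ω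

/-- Membership in the generalized Orlicz–Sobolev space `W^{1,G(·)}(Ω)`,
with distributional gradient `du`. -/
def MemW1G {n : ℕ} (Ω : Set (EuclideanSpace ℝ (Fin n)))
    (G : EuclideanSpace ℝ (Fin n) → ℝ → ℝ) (u : EuclideanSpace ℝ (Fin n) → ℝ)
    (du : EuclideanSpace ℝ (Fin n) → EuclideanSpace ℝ (Fin n)) : Prop :=
  MemLG Ω G u ∧ MemLG Ω G (fun x => ‖du x‖) ∧ IsWeakGrad Ω u du

/-- `u` (with gradient `du`) is a weak supersolution of `-div A(x,∇u) = 0` in `Ω`. -/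
def IsSupersol {n : ℕ} (Ω : Set (EuclideanSpace ℝ (Fin n)))
    (G : EuclideanSpace ℝ (Fin n) → ℝ → ℝ)
    (A : EuclideanSpace ℝ (Fin n) → EuclideanSpace ℝ (Fin n) → EuclideanSpace ℝ (Fin n))
    (u : EuclideanSpace ℝ (Fin n) → ℝ)
    (du : EuclideanSpace ℝ (Fin n) → EuclideanSpace ℝ (Fin n)) : Prop :=
  MemW1G Ω G u du ∧ ∀ φ : EuclideanSpace ℝ (Fin n) → ℝ, IsTest Ω φ → (∀ x, 0 ≤ φ x) →
    0 ≤ ∫ x in Ω, (inner ℝ (A x (du x)) (gradient φ x) : ℝ)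

/-- `u` (with gradient `du`) is a weak subsolution of `-div A(x,∇u) = 0` in `Ω`. -/
def IsSubsol {n : ℕ} (Ω : Set (EuclideanSpace ℝ (Fin n)))
    (G : EuclideanSpace ℝ (Fin n) → ℝ → ℝ)
    (A : EuclideanSpace ℝ (Fin n) → EuclideanSpace ℝ (Fin n) → EuclideanSpace ℝ (Fin n))
    (u : EuclideanSpace ℝ (Fin n) → ℝ)
    (du : EuclideanSpace ℝ (Fin n) → EuclideanSpace ℝ (Fin n)) : Prop :=
  MemW1G Ω G u du ∧ ∀ φ : EuclideanSpace ℝ (Fin n) → ℝ, IsTest Ω φ → (∀ x, 0 ≤ φ x) →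
    ∫ x in Ω, (inner ℝ (A x (du x)) (gradient φ x) : ℝ) ≤ 0

/-- `μ` is the Radon measure associated with `u`: `-div A(x,∇u) = μ` weakly in `Ω`. -/
def HasAssocMeasure {n : ℕ} (Ω : Set (EuclideanSpace ℝ (Fin n)))
    (A : EuclideanSpace ℝ (Fin n) → EuclideanSpace ℝ (Fin n) → EuclideanSpace ℝ (Fin n))
    (du : EuclideanSpace ℝ (Fin n) → EuclideanSpace ℝ (Fin n))
    (μ : Measure (EuclideanSpace ℝ (Fin n))) : Prop :=
  ∀ φ : EuclideanSpace ℝ (Fin n) → ℝ, IsTest Ω φ →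
    ∫ x in Ω, (inner ℝ (A x (du x)) (gradient φ x) : ℝ) = ∫ x, φ x ∂μ

/-- `g⁻¹(x,s) = sup {t ≥ 0 : g(x,t) ≤ s}`. -/
def ginv {n : ℕ} (g : EuclideanSpace ℝ (Fin n) → ℝ → ℝ)
    (x : EuclideanSpace ℝ (Fin n)) (s : ℝ) : ℝ :=
  sSup {t : ℝ | 0 ≤ t ∧ g x t ≤ s}

/-- The Wolff potential `W^μ_{G(·)}(x,R) = ∫₀^R g⁻¹(x, μ(B(x,s))/s^{n-1}) ds`. -/
def wolff {n : ℕ} (g : EuclideanSpace ℝ (Fin n) → ℝ → ℝ)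
    (μ : Measure (EuclideanSpace ℝ (Fin n))) (x : EuclideanSpace ℝ (Fin n)) (R : ℝ) : ℝ :=
  ∫ s in Set.Ioc (0:ℝ) R, ginv g x ((μ (Metric.ball x s)).toReal / s ^ (n - 1))

/-- The Luxembourg norm on `L^{G(·)}(Ω)`. -/
def luxNorm {n : ℕ} (Ω : Set (EuclideanSpace ℝ (Fin n)))
    (G : EuclideanSpace ℝ (Fin n) → ℝ → ℝ) (u : EuclideanSpace ℝ (Fin n) → ℝ) : ℝ :=
  sInf {l : ℝ | 0 < l ∧ ∫⁻ x in Ω, ENNReal.ofReal (G x (|u x| / l)) ≤ 1}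

/-- The norm of `W^{1,G(·)}(Ω)`: `‖u‖_{G(·)} + ‖∇u‖_{G(·)}`. -/
def sobNorm {n : ℕ} (Ω : Set (EuclideanSpace ℝ (Fin n)))
    (G : EuclideanSpace ℝ (Fin n) → ℝ → ℝ) (u : EuclideanSpace ℝ (Fin n) → ℝ)
    (du : EuclideanSpace ℝ (Fin n) → EuclideanSpace ℝ (Fin n)) : ℝ :=
  luxNorm Ω G u + luxNorm Ω G fun x => ‖du x‖

/-- The conjugate Φ-function `G*(x,s) = sup_{t ≥ 0} (s·t − G(x,t))`. -/
def conjPhi {n : ℕ} (G : EuclideanSpace ℝ (Fin n) → ℝ → ℝ)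
    (x : EuclideanSpace ℝ (Fin n)) (s : ℝ) : ℝ :=
  sSup {v : ℝ | ∃ t : ℝ, 0 ≤ t ∧ v = s * t - G x t}

/-- The Lorentz quantity `‖f‖^{q,∞}_E = sup_{t>0} t·|{x ∈ E : |f x| ≥ t}|^{1/q}`. -/
def lorentzWeak {n : ℕ} (E : Set (EuclideanSpace ℝ (Fin n))) (q : ℝ)
    (f : EuclideanSpace ℝ (Fin n) → ℝ) : ℝ≥0∞ :=
  ⨆ t : ℝ, ⨆ _ : 0 < t, ENNReal.ofReal t * volume (E ∩ {x | t ≤ |f x|}) ^ (1/q)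

/-- The Lorentz quantity `‖f‖^{q,1}_E = q·∫₀^∞ |{x ∈ E : |f x| ≥ t}|^{1/q} dt`. -/
def lorentzOne {n : ℕ} (E : Set (EuclideanSpace ℝ (Fin n))) (q : ℝ)
    (f : EuclideanSpace ℝ (Fin n) → ℝ) : ℝ≥0∞ :=
  ENNReal.ofReal q * ∫⁻ t in Set.Ioi (0:ℝ), volume (E ∩ {x | t ≤ |f x|}) ^ (1/q)

namespace PWaux

/-- Pointwise hypotheses at a good point. -/
structure PW (G₁ g₁ : ℝ → ℝ) (g₀ gu c₀ : ℝ) : Prop where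
  nonneg : ∀ t, 0 ≤ t → 0 ≤ g₁ t
  mono : ∀ s t, 0 ≤ s → s ≤ t → g₁ s ≤ g₁ t
  repr : ∀ t, 0 ≤ t → G₁ t = ∫ s in Set.Ioc (0:ℝ) t, g₁ s
  sc : ∀ t, 0 < t → g₀ * G₁ t ≤ t * g₁ t ∧ t * g₁ t ≤ gu * G₁ t
  a0 : c₀⁻¹ ≤ G₁ 1 ∧ G₁ 1 ≤ c₀

variable {G₁ g₁ : ℝ → ℝ} {g₀ gu c₀ : ℝ}

theorem PW.integrableOn_g (h : PW G₁ g₁ g₀ gu c₀) {a b : ℝ} (ha : 0 ≤ a) :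
    IntegrableOn g₁ (Set.Ioc a b) := by
  have : MonotoneOn g₁ (Set.Icc a b) := fun x hx y hy hxy =>
    h.mono x y (le_trans ha hx.1) hxy
  exact (this.integrableOn_isCompact isCompact_Icc).mono_set Set.Ioc_subset_Icc_self

theorem PW.G_zero (h : PW G₁ g₁ g₀ gu c₀) : G₁ 0 = 0 := by
  simpa using h.repr 0 le_rfl

theorem PW.G_diff (h : PW G₁ g₁ g₀ gu c₀) {a b : ℝ} (ha : 0 ≤ a) (hab : a ≤ b) :
    G₁ b - G₁ a = ∫ s in Set.Ioc a b, g₁ s := by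
  have hb : 0 ≤ b := le_trans ha hab
  rw [h.repr a ha, h.repr b hb]
  have hsplit : Set.Ioc (0:ℝ) b = Set.Ioc 0 a ∪ Set.Ioc a b := (Set.Ioc_union_Ioc_eq_Ioc ha hab).symm
  rw [hsplit, setIntegral_union (Set.Ioc_disjoint_Ioc_of_le le_rfl) measurableSet_Ioc
    (h.integrableOn_g le_rfl) (h.integrableOn_g ha)]
  ring

theorem PW.G_mono (h : PW G₁ g₁ g₀ gu c₀) {a b : ℝ} (ha : 0 ≤ a) (hab : a ≤ b) :
    G₁ a ≤ G₁ b := by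
  have := h.G_diff ha hab
  have hint : 0 ≤ ∫ s in Set.Ioc a b, g₁ s :=
    setIntegral_nonneg measurableSet_Ioc (fun x hx => h.nonneg x (le_trans ha hx.1.le))
  linarith

theorem PW.G_nonneg (h : PW G₁ g₁ g₀ gu c₀) {t : ℝ} (ht : 0 ≤ t) : 0 ≤ G₁ t := by
  have := h.G_mono le_rfl ht
  rw [h.G_zero] at this; exact this

theorem PW.G_diff_le (h : PW G₁ g₁ g₀ gu c₀) {a b : ℝ} (ha : 0 ≤ a) (hab : a ≤ b) :
    G₁ b - G₁ a ≤ (b - a) * g₁ b := by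
  rw [h.G_diff ha hab]
  calc ∫ s in Set.Ioc a b, g₁ s ≤ ∫ _ in Set.Ioc a b, g₁ b := by
        apply setIntegral_mono_on (h.integrableOn_g ha) (integrableOn_const (by
          rw [Real.volume_Ioc]; exact ENNReal.ofReal_ne_top)) measurableSet_Ioc
        intro x hx
        exact h.mono x b (le_trans ha hx.1.le) hx.2
    _ = (b - a) * g₁ b := by
        rw [setIntegral_const, Real.volume_real_Ioc_of_le hab, smul_eq_mul]

theorem PW.G_diff_ge (h : PW G₁ g₁ g₀ gu c₀) {a b : ℝ} (ha : 0 ≤ a) (hab : a ≤ b) :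
    (b - a) * g₁ a ≤ G₁ b - G₁ a := by
  rw [h.G_diff ha hab]
  calc (b - a) * g₁ a = ∫ _ in Set.Ioc a b, g₁ a := by
        rw [setIntegral_const, Real.volume_real_Ioc_of_le hab, smul_eq_mul]
    _ ≤ ∫ s in Set.Ioc a b, g₁ s := by
        apply setIntegral_mono_on (integrableOn_const (by
          rw [Real.volume_Ioc]; exact ENNReal.ofReal_ne_top)) (h.integrableOn_g ha)
          measurableSet_Ioc
        intro x hx
        exact h.mono a x ha hx.1.le

theorem PW.G_le_t_g (h : PW G₁ g₁ g₀ gu c₀) {t : ℝ} (ht : 0 ≤ t) : G₁ t ≤ t * g₁ t := by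
  have := h.G_diff_le le_rfl ht
  rw [h.G_zero] at this; linarith

theorem PW.slope_mono (h : PW G₁ g₁ g₀ gu c₀) {a b : ℝ} (ha : 0 < a) (hab : a ≤ b) :
    G₁ a / a ≤ G₁ b / b := by
  have hb : 0 < b := lt_of_lt_of_le ha hab
  rw [div_le_div_iff₀ ha hb]
  have h1 := h.G_diff_ge ha.le hab
  have h2 := h.G_le_t_g ha.le
  -- G₁ b ≥ G₁ a + (b-a) g₁ a, and a * g₁ a ≥ G₁ a
  nlinarith [h.nonneg a ha.le, h.G_nonneg ha.le]

theorem PW.G_scale_down (h : PW G₁ g₁ g₀ gu c₀) {l t : ℝ} (hl : 1 ≤ l) (ht : 0 ≤ t) :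
    G₁ (t / l) ≤ G₁ t / l := by
  have hl0 : 0 < l := lt_of_lt_of_le one_pos hl
  have htl : 0 ≤ t / l := div_nonneg ht hl0.le
  have htl2 : t / l ≤ t := by
    rw [div_le_iff₀ hl0]; nlinarith
  have h1 := h.G_diff_ge htl htl2
  have h2 := h.G_le_t_g htl
  rw [le_div_iff₀ hl0]
  -- G₁ t ≥ G₁ (t/l) + (t - t/l) g₁(t/l) ≥ G₁(t/l) + (l-1)(t/l) g₁(t/l) ≥ l G₁(t/l)
  have key : (t - t / l) = (l - 1) * (t / l) := by field_simp
  rw [key] at h1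
  nlinarith [h.nonneg (t/l) htl, h.G_nonneg htl]


section
variable (hg₀ : 1 < g₀) (hgu : g₀ ≤ gu) (hc₀ : 1 < c₀)
include hg₀ hgu

theorem PW.rev_dbl (h : PW G₁ g₁ g₀ gu c₀) {t : ℝ} (ht : 0 ≤ t) :
    (1 + g₀) * G₁ t ≤ G₁ (2 * t) := by
  rcases eq_or_lt_of_le ht with rfl | ht
  · simp [h.G_zero]
  · have h1 := h.G_diff_ge ht.le (by linarith : t ≤ 2 * t)
    have h2 := (h.sc t ht).1
    have : (2 * t - t) * g₁ t = t * g₁ t := by ring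
    rw [this] at h1
    linarith

theorem PW.rev_dbl_pow (h : PW G₁ g₁ g₀ gu c₀) {t : ℝ} (ht : 0 ≤ t) (k : ℕ) :
    (1 + g₀) ^ k * G₁ t ≤ G₁ (2 ^ k * t) := by
  induction k with
  | zero => simp
  | succ k ih =>
      have h2t : (0:ℝ) ≤ 2 ^ k * t := by positivity
      have := h.rev_dbl hg₀ hgu h2t
      have hG : 0 ≤ G₁ t := h.G_nonneg ht
      have hg0 : (0:ℝ) < 1 + g₀ := by linarith
      calc (1 + g₀) ^ (k+1) * G₁ t = (1 + g₀) * ((1 + g₀) ^ k * G₁ t) := by ring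
        _ ≤ (1 + g₀) * G₁ (2 ^ k * t) := by nlinarith [h.G_nonneg h2t]
        _ ≤ G₁ (2 * (2 ^ k * t)) := h.rev_dbl hg₀ hgu h2t
        _ = G₁ (2 ^ (k+1) * t) := by ring_nf

omit hg₀ hgu

theorem PW.dbl_step (h : PW G₁ g₁ g₀ gu c₀) (hgu0 : 0 < gu) {t : ℝ} (ht : 0 < t) :
    G₁ (Real.exp (2 * gu)⁻¹ * t) ≤ 2 * G₁ t := by
  set lam : ℝ := Real.exp (2 * gu)⁻¹ with hlam
  have hlam1 : 1 < lam := by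
    rw [hlam]
    have : (0:ℝ) < (2 * gu)⁻¹ := by positivity
    calc (1:ℝ) = Real.exp 0 := by simp
      _ < Real.exp (2 * gu)⁻¹ := Real.exp_lt_exp.mpr this
  have hlt : t ≤ lam * t := by nlinarith
  have hd := h.G_diff ht.le hlt
  have hGlam : 0 ≤ G₁ (lam * t) := h.G_nonneg (by positivity)
  -- pointwise bound: on Ioc t (lam*t), g₁ s ≤ gu * G₁ (lam*t) / s
  have hptwise : ∀ s ∈ Set.Ioc t (lam * t), g₁ s ≤ gu * G₁ (lam * t) * s⁻¹ := by
    intro s hs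
    have hs0 : 0 < s := lt_trans ht hs.1
    have h2 := (h.sc s hs0).2
    have hGmono : G₁ s ≤ G₁ (lam * t) := h.G_mono hs0.le hs.2
    rw [mul_comm (gu * G₁ (lam * t)) s⁻¹, ← div_eq_inv_mul, le_div_iff₀ hs0]
    nlinarith
  -- integral of the majorant
  have hint : ∫ s in Set.Ioc t (lam * t), gu * G₁ (lam * t) * s⁻¹
      = gu * G₁ (lam * t) * (2 * gu)⁻¹ := by
    rw [MeasureTheory.integral_const_mul]
    have : ∫ s in Set.Ioc t (lam * t), s⁻¹ = ∫ s in t..(lam * t), s⁻¹ := by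
      rw [intervalIntegral.integral_of_le hlt]
    rw [this, integral_inv_of_pos ht (by positivity)]
    congr 1
    have : lam * t / t = lam := by field_simp
    rw [this, Real.log_exp]
  have hmaj : ∫ s in Set.Ioc t (lam * t), g₁ s ≤ gu * G₁ (lam * t) * (2 * gu)⁻¹ := by
    rw [← hint]
    apply setIntegral_mono_on (h.integrableOn_g ht.le) ?_ measurableSet_Ioc hptwise
    have hcont : ContinuousOn (fun s : ℝ => gu * G₁ (lam * t) * s⁻¹) (Set.Icc t (lam * t)) := by
      apply ContinuousOn.mul continuousOn_const
      exact ContinuousOn.inv₀ continuousOn_id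
        (fun x hx => ne_of_gt (lt_of_lt_of_le ht hx.1))
    exact (hcont.integrableOn_compact isCompact_Icc).mono_set Set.Ioc_subset_Icc_self
  have hval : gu * G₁ (lam * t) * (2 * gu)⁻¹ = G₁ (lam * t) / 2 := by
    field_simp
  rw [hval] at hmaj
  linarith

theorem PW.dbl_pow (h : PW G₁ g₁ g₀ gu c₀) (hgu0 : 0 < gu) {t : ℝ} (ht : 0 ≤ t) (k : ℕ) :
    G₁ (Real.exp (2 * gu)⁻¹ ^ k * t) ≤ 2 ^ k * G₁ t := by
  rcases eq_or_lt_of_le ht with rfl | ht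
  · rw [mul_zero, h.G_zero, mul_zero]
  induction k with
  | zero => simp
  | succ k ih =>
      have hlam0 : (0:ℝ) < Real.exp (2 * gu)⁻¹ := Real.exp_pos _
      calc G₁ (Real.exp (2 * gu)⁻¹ ^ (k+1) * t)
          = G₁ (Real.exp (2 * gu)⁻¹ * (Real.exp (2 * gu)⁻¹ ^ k * t)) := by ring_nf
        _ ≤ 2 * G₁ (Real.exp (2 * gu)⁻¹ ^ k * t) := h.dbl_step hgu0 (by positivity)
        _ ≤ 2 * (2 ^ k * G₁ t) := by linarith
        _ = 2 ^ (k+1) * G₁ t := by ring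

/-- Doubling constant for ratio `c`. -/
noncomputable def Ddbl (gu c : ℝ) : ℝ := 2 ^ (⌈Real.log c * (2 * gu)⌉₊)

theorem Ddbl_nonneg (gu c : ℝ) : 0 ≤ Ddbl gu c := by unfold Ddbl; positivity

theorem PW.dbl (h : PW G₁ g₁ g₀ gu c₀) (hgu0 : 0 < gu) {c t : ℝ} (hc : 1 ≤ c) (ht : 0 ≤ t) :
    G₁ (c * t) ≤ Ddbl gu c * G₁ t := by
  set k : ℕ := ⌈Real.log c * (2 * gu)⌉₊ with hk
  have hlogc : 0 ≤ Real.log c := Real.log_nonneg hc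
  have hck : c ≤ Real.exp (2 * gu)⁻¹ ^ k := by
    have hc0 : (0:ℝ) < c := by linarith
    rw [← Real.exp_log hc0, ← Real.exp_nat_mul]
    apply Real.exp_le_exp.mpr
    have := Nat.le_ceil (Real.log c * (2 * gu))
    calc Real.log c = (Real.log c * (2 * gu)) * (2 * gu)⁻¹ := by field_simp
      _ ≤ (k : ℝ) * (2 * gu)⁻¹ := by
          apply mul_le_mul_of_nonneg_right _ (by positivity)
          exact_mod_cast Nat.le_ceil _
  calc G₁ (c * t) ≤ G₁ (Real.exp (2 * gu)⁻¹ ^ k * t) := by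
        apply h.G_mono (by positivity) (mul_le_mul_of_nonneg_right hck ht)
    _ ≤ 2 ^ k * G₁ t := h.dbl_pow hgu0 ht k
    _ = Ddbl gu c * G₁ t := by rw [Ddbl]


/-- The set of values whose sup is the conjugate function. -/
def Sset (G₁ : ℝ → ℝ) (s : ℝ) : Set ℝ := {v : ℝ | ∃ t : ℝ, 0 ≤ t ∧ v = s * t - G₁ t}

theorem zero_mem_Sset (h : PW G₁ g₁ g₀ gu c₀) (s : ℝ) : (0:ℝ) ∈ Sset G₁ s :=
  ⟨0, le_rfl, by rw [h.G_zero]; ring⟩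

include hg₀ hgu hc₀ in
theorem PW.superlin (h : PW G₁ g₁ g₀ gu c₀) {s : ℝ} (hs : 0 ≤ s) :
    ∃ T : ℝ, 1 ≤ T ∧ ∀ t, T ≤ t → s * t ≤ G₁ t := by
  have hγ : (1:ℝ) < (1 + g₀) / 2 := by linarith [((by linarith : (1:ℝ) < g₀))]
  obtain ⟨k, hk⟩ := pow_unbounded_of_one_lt (s * c₀) hγ
  have hc₀0 : (0:ℝ) < c₀ := by linarith
  refine ⟨2 ^ k, one_le_pow₀ (by norm_num), fun t ht => ?_⟩
  have hT0 : (0:ℝ) < 2 ^ k := by positivity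
  have ht0 : (0:ℝ) < t := lt_of_lt_of_le hT0 ht
  have hGT : (1 + g₀) ^ k * c₀⁻¹ ≤ G₁ (2 ^ k) := by
    calc (1 + g₀) ^ k * c₀⁻¹ ≤ (1 + g₀) ^ k * G₁ 1 := by
          apply mul_le_mul_of_nonneg_left h.a0.1 (by positivity)
      _ ≤ G₁ (2 ^ k * 1) := h.rev_dbl_pow hg₀ hgu (by norm_num) k
      _ = G₁ (2 ^ k) := by rw [mul_one]
  have hslope := h.slope_mono hT0 ht
  have e1 : ((1 + g₀) / 2 : ℝ) ^ k = (1 + g₀) ^ k / 2 ^ k := div_pow _ _ k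
  have hk' : s * c₀ * 2 ^ k < (1 + g₀) ^ k := by
    rw [e1, lt_div_iff₀ hT0] at hk; exact hk
  have h3 : s * 2 ^ k ≤ G₁ (2 ^ k) := by
    refine le_trans ?_ hGT
    have e2 : s * 2 ^ k = s * c₀ * 2 ^ k * c₀⁻¹ := by field_simp
    rw [e2]
    exact le_of_lt (mul_lt_mul_of_pos_right hk' (inv_pos.mpr hc₀0))
  have h4 : s ≤ G₁ (2 ^ k) / 2 ^ k := (le_div_iff₀ hT0).mpr h3
  have h5 : s ≤ G₁ t / t := le_trans h4 hslope
  calc s * t ≤ (G₁ t / t) * t := mul_le_mul_of_nonneg_right h5 ht0.le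
    _ = G₁ t := by field_simp


include hg₀ hgu hc₀ in
theorem PW.bddAbove_Sset (h : PW G₁ g₁ g₀ gu c₀) {s : ℝ} (hs : 0 ≤ s) :
    BddAbove (Sset G₁ s) := by
  obtain ⟨T, hT1, hT⟩ := h.superlin hg₀ hgu hc₀ hs
  refine ⟨s * T, fun v hv => ?_⟩
  obtain ⟨t, ht0, rfl⟩ := hv
  rcases le_total t T with hle | hle
  · have := h.G_nonneg ht0
    nlinarith
  · have := hT t hle
    nlinarith [mul_nonneg hs (le_trans (by linarith : (0:ℝ) ≤ T) hle)]

include hg₀ hgu hc₀ in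
theorem PW.young (h : PW G₁ g₁ g₀ gu c₀) {a b : ℝ} (ha : 0 ≤ a) (hb : 0 ≤ b) :
    a * b ≤ G₁ a + sSup (Sset G₁ b) := by
  have hmem : b * a - G₁ a ∈ Sset G₁ b := ⟨a, ha, rfl⟩
  have := le_csSup (h.bddAbove_Sset hg₀ hgu hc₀ hb) hmem
  linarith [this]

theorem PW.conj_nonneg (h : PW G₁ g₁ g₀ gu c₀) (s : ℝ) : 0 ≤ sSup (Sset G₁ s) := by
  by_cases hbd : BddAbove (Sset G₁ s)
  · exact le_csSup hbd (zero_mem_Sset h s)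
  · rw [Real.sSup_of_not_bddAbove hbd]

/-- The scaling constant for the conjugate function. -/
noncomputable def Kconj (g₀ c : ℝ) : ℝ := (1 + g₀) ^ (⌈Real.log c / Real.log ((1 + g₀) / 2)⌉₊)

theorem Kconj_pos {g₀ : ℝ} (hg₀ : 1 < g₀) (c : ℝ) : 0 < Kconj g₀ c := by
  unfold Kconj; positivity

include hg₀ hgu hc₀ in
theorem PW.conj_scale (h : PW G₁ g₁ g₀ gu c₀) {c s : ℝ} (hc : 1 ≤ c) (hs : 0 ≤ s) :
    sSup (Sset G₁ (c * s)) ≤ Kconj g₀ c * sSup (Sset G₁ s) := by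
  set k : ℕ := ⌈Real.log c / Real.log ((1 + g₀) / 2)⌉₊ with hkdef
  have hγ : (1:ℝ) < (1 + g₀) / 2 := by linarith
  have hlogγ : 0 < Real.log ((1 + g₀) / 2) := Real.log_pos hγ
  have hc0 : (0:ℝ) < c := by linarith
  -- c * 2 ^ k ≤ (1 + g₀) ^ k
  have hck : c * 2 ^ k ≤ (1 + g₀) ^ k := by
    have h1 : Real.log c ≤ k * Real.log ((1 + g₀) / 2) := by
      have h0 : Real.log c / Real.log ((1 + g₀) / 2) ≤ (k : ℝ) := Nat.le_ceil _
      exact (div_le_iff₀ hlogγ).mp h0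
    have h2 : c ≤ ((1 + g₀) / 2) ^ k := by
      calc c = Real.exp (Real.log c) := (Real.exp_log hc0).symm
        _ ≤ Real.exp ((k : ℝ) * Real.log ((1 + g₀) / 2)) := Real.exp_le_exp.mpr h1
        _ = ((1 + g₀) / 2) ^ k := by
            rw [← Real.log_pow, Real.exp_log (by positivity)]
    have h3 : ((1 + g₀) / 2 : ℝ) ^ k = (1 + g₀) ^ k / 2 ^ k := div_pow _ _ k
    rw [h3, le_div_iff₀ (by positivity : (0:ℝ) < 2 ^ k)] at h2
    exact h2
  have hK : Kconj g₀ c = (1 + g₀) ^ k := rfl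
  have hbd := h.bddAbove_Sset hg₀ hgu hc₀ hs
  apply Real.sSup_le
  · rintro v ⟨t, ht0, rfl⟩
    set u : ℝ := t / 2 ^ k with hudef
    have hu0 : 0 ≤ u := by positivity
    have htu : t = 2 ^ k * u := by rw [hudef]; field_simp
    have hrd := h.rev_dbl_pow hg₀ hgu hu0 k
    have hmem : s * u - G₁ u ∈ Sset G₁ s := ⟨u, hu0, rfl⟩
    have hle : s * u - G₁ u ≤ sSup (Sset G₁ s) := le_csSup hbd hmem
    have hsu : 0 ≤ s * u := mul_nonneg hs hu0
    calc c * s * t - G₁ t = c * 2 ^ k * (s * u) - G₁ (2 ^ k * u) := by rw [htu]; ring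
      _ ≤ (1 + g₀) ^ k * (s * u) - (1 + g₀) ^ k * G₁ u := by
          have := mul_le_mul_of_nonneg_right hck hsu
          linarith
      _ = (1 + g₀) ^ k * (s * u - G₁ u) := by ring
      _ ≤ (1 + g₀) ^ k * sSup (Sset G₁ s) := by
          apply mul_le_mul_of_nonneg_left hle (by positivity)
      _ = Kconj g₀ c * sSup (Sset G₁ s) := by rw [hK]
  · exact mul_nonneg (Kconj_pos hg₀ c).le (h.conj_nonneg s)

/-- Continuity of `G₁` along nonnegative sequences. -/
theorem PW.G_cont (h : PW G₁ g₁ g₀ gu c₀) {t : ℕ → ℝ} {t₀ : ℝ} (ht : ∀ n, 0 ≤ t n)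
    (ht₀ : 0 ≤ t₀) (hlim : Tendsto t atTop (nhds t₀)) :
    Tendsto (fun n => G₁ (t n)) atTop (nhds (G₁ t₀)) := by
  rw [← tendsto_sub_nhds_zero_iff]
  apply squeeze_zero_norm' (a := fun n => g₁ (t₀ + 1) * |t n - t₀|)
  · have hev : ∀ᶠ n in atTop, |t n - t₀| ≤ 1 := by
      have := (Metric.tendsto_atTop.mp hlim) 1 one_pos
      obtain ⟨N, hN⟩ := this
      exact eventually_atTop.mpr ⟨N, fun n hn => le_of_lt (by simpa [Real.dist_eq] using hN n hn)⟩
    filter_upwards [hev] with n hn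
    have hbn : t n ≤ t₀ + 1 := by
      have := abs_le.mp hn; linarith [this.2]
    rw [Real.norm_eq_abs]
    rcases le_total (t n) t₀ with hle | hle
    · have hd := h.G_diff_le (ht n) hle
      have hg := h.mono (t₀) (t₀+1) ht₀ (by linarith)
      have hgn : 0 ≤ g₁ t₀ := h.nonneg t₀ ht₀
      have hGm := h.G_mono (ht n) hle
      rw [abs_of_nonpos (by linarith : G₁ (t n) - G₁ t₀ ≤ 0),
        abs_of_nonpos (by linarith : t n - t₀ ≤ 0)]
      nlinarith
    · have hd := h.G_diff_le ht₀ hle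
      have hGm := h.G_mono ht₀ hle
      have hg := h.mono (t n) (t₀+1) (ht n) hbn
      have hgn : 0 ≤ g₁ (t n) := h.nonneg (t n) (ht n)
      rw [abs_of_nonneg (by linarith : 0 ≤ G₁ (t n) - G₁ t₀),
        abs_of_nonneg (by linarith : (0:ℝ) ≤ t n - t₀)]
      nlinarith
  · have : Tendsto (fun n => |t n - t₀|) atTop (nhds 0) := by
      have := (tendsto_sub_nhds_zero_iff.mpr hlim).abs
      simpa using this
    have := this.const_mul (g₁ (t₀ + 1))
    simpa using this

/-- Rational supremum representation, for measurability. -/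
theorem PW.qsup (h : PW G₁ g₁ g₀ gu c₀) {t : ℝ} (ht : 0 ≤ t) :
    (⨆ q : ℚ, if 0 ≤ (q:ℝ) ∧ (q:ℝ) < t then ENNReal.ofReal (G₁ q) else 0)
      = ENNReal.ofReal (G₁ t) := by
  apply le_antisymm
  · apply iSup_le
    intro q
    split_ifs with hq
    · exact ENNReal.ofReal_le_ofReal (h.G_mono hq.1 hq.2.le)
    · exact zero_le
  · rcases eq_or_lt_of_le ht with rfl | ht
    · simp [h.G_zero]
    -- choose rationals increasing to t
    have hQ : ∀ n : ℕ, ∃ q : ℚ, max 0 (t - 1/(n+1)) < (q:ℝ) ∧ (q:ℝ) < t := by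
      intro n
      apply exists_rat_btwn
      apply max_lt ht
      have : (0:ℝ) < 1/(n+1) := by positivity
      linarith
    choose q hq1 hq2 using hQ
    have hq0 : ∀ n, 0 ≤ ((q n : ℝ)) := fun n => le_of_lt (lt_of_le_of_lt (le_max_left _ _) (hq1 n))
    have hqlim : Tendsto (fun n => ((q n : ℝ))) atTop (nhds t) := by
      refine tendsto_of_tendsto_of_tendsto_of_le_of_le ?_ tendsto_const_nhds
        (fun n => (hq1 n).le) (fun n => (hq2 n).le)
      have h1 : Tendsto (fun n : ℕ => t - 1/((n:ℝ)+1)) atTop (nhds (t - 0)) :=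
        tendsto_const_nhds.sub tendsto_one_div_add_atTop_nhds_zero_nat
      have h2 : Tendsto (fun n : ℕ => max 0 (t - 1/((n:ℝ)+1))) atTop (nhds (max 0 (t - 0))) :=
        tendsto_const_nhds.max h1
      simpa [max_eq_right ht.le] using h2
    have hGlim : Tendsto (fun n => ENNReal.ofReal (G₁ (q n))) atTop
        (nhds (ENNReal.ofReal (G₁ t))) :=
      (ENNReal.continuous_ofReal.tendsto _).comp (h.G_cont hq0 ht.le hqlim)
    apply le_of_tendsto hGlim
    apply Eventually.of_forall
    intro n
    have : (if 0 ≤ ((q n:ℝ)) ∧ ((q n:ℝ)) < t then ENNReal.ofReal (G₁ (q n)) else 0)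
        = ENNReal.ofReal (G₁ (q n)) := if_pos ⟨hq0 n, hq2 n⟩
    rw [← this]
    exact le_iSup (fun r : ℚ => if 0 ≤ (r:ℝ) ∧ (r:ℝ) < t then ENNReal.ofReal (G₁ r) else 0) (q n)

end

theorem aemeasurable_abs {α : Type*} [MeasurableSpace α] {μ : MeasureTheory.Measure α}
    {f : α → ℝ} (hf : AEMeasurable f μ) : AEMeasurable (fun x => |f x|) μ := by
  simpa [Real.norm_eq_abs] using hf.norm

/-- Carathéodory-type measurability of `x ↦ G x (φ x)`. -/
theorem aemeas_comp {α : Type*} [MeasurableSpace α] {μ : MeasureTheory.Measure α}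
    {G g : α → ℝ → ℝ} {g₀ gu c₀ : ℝ}
    (hGmeas : ∀ t : ℝ, Measurable fun x => G x t)
    (hPW : ∀ᵐ x ∂μ, PW (G x) (g x) g₀ gu c₀)
    {φ : α → ℝ} (hφ : AEMeasurable φ μ) (hφ0 : ∀ x, 0 ≤ φ x) :
    AEMeasurable (fun x => ENNReal.ofReal (G x (φ x))) μ ∧
      AEMeasurable (fun x => G x (φ x)) μ := by
  classical
  set ψ := hφ.mk φ with hψdef
  have hψm : Measurable ψ := hφ.measurable_mk
  have heq : φ =ᵐ[μ] ψ := hφ.ae_eq_mk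
  set F : α → ENNReal := fun x => ⨆ q : ℚ,
    if (q:ℝ) < ψ x then (if 0 ≤ (q:ℝ) then ENNReal.ofReal (G x q) else 0) else 0 with hFdef
  have hFm : Measurable F := by
    apply Measurable.iSup
    intro q
    apply Measurable.ite (measurableSet_lt measurable_const hψm)
    · apply Measurable.ite (MeasurableSet.const _)
      · exact (hGmeas q).ennreal_ofReal
      · exact measurable_const
    · exact measurable_const
  have hae : (fun x => ENNReal.ofReal (G x (φ x))) =ᵐ[μ] F := by
    filter_upwards [hPW, heq] with x hx hxeq
    have h1 : F x = ⨆ q : ℚ, if 0 ≤ (q:ℝ) ∧ (q:ℝ) < φ x then ENNReal.ofReal (G x q) else 0 := by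
      rw [hFdef]
      apply iSup_congr
      intro q
      rw [← hxeq] at *
      by_cases h1 : (q:ℝ) < φ x <;> by_cases h2 : 0 ≤ (q:ℝ) <;> simp [h1, h2]
    rw [h1, hx.qsup (hφ0 x)]
  refine ⟨⟨F, hFm, hae⟩, ⟨fun x => (F x).toReal, hFm.ennreal_toReal, ?_⟩⟩
  filter_upwards [hPW, hae] with x hx hfx
  rw [← hfx, ENNReal.toReal_ofReal (hx.G_nonneg (hφ0 x))]

end PWaux


set_option maxHeartbeats 2000000

/-- **Lemma 4.2** (bounded and a.e. convergent sequences converge weakly in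
`L^{G(·)}(Ω)`, i.e. against every `v ∈ L^{G*(·)}(Ω)`). -/
theorem weak_convergence_of_bounded_ae_convergent (n : ℕ)
    (Ω : Set (EuclideanSpace ℝ (Fin n)))
    (hΩo : IsOpen Ω) (hΩb : Bornology.IsBounded Ω)
    (G g : EuclideanSpace ℝ (Fin n) → ℝ → ℝ) (g₀ gu c₀ : ℝ)
    (hg₀ : 1 < g₀) (hgu : g₀ ≤ gu) (hc₀ : 1 < c₀)
    (hG : IsGPhi Ω G g) (hSC : SCcond Ω G g g₀ gu) (hA0 : A0cond Ω G c₀)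
    (u : ℕ → EuclideanSpace ℝ (Fin n) → ℝ) (v : EuclideanSpace ℝ (Fin n) → ℝ)
    (hu : ∀ i, MemLG Ω G (u i))
    (hbdd : BddAbove (Set.range fun i => luxNorm Ω G (u i)))
    (hae : ∀ᵐ x ∂volume.restrict Ω, Tendsto (fun i => u i x) atTop (nhds (v x))) :
    MemLG Ω G v ∧
    ∀ w : EuclideanSpace ℝ (Fin n) → ℝ, MemLG Ω (conjPhi G) w →
      Tendsto (fun i => ∫ x in Ω, u i x * w x) atTop
        (nhds (∫ x in Ω, v x * w x)) := by
  classical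
  have hΩm : MeasurableSet Ω := hΩo.measurableSet
  have hΩfin : volume Ω < ⊤ := hΩb.measure_lt_top
  have hfinμ : IsFiniteMeasure (volume.restrict Ω) :=
    ⟨by rwa [Measure.restrict_apply_univ]⟩
  have hgu0 : (0:ℝ) < gu := by linarith
  have hlam_aux : (0:ℝ) < gu := hgu0
  -- the a.e. pointwise structure
  have hPW : ∀ᵐ x ∂(volume.restrict Ω), PWaux.PW (G x) (g x) g₀ gu c₀ := by
    rw [ae_restrict_iff' hΩm]
    filter_upwards [hG.ae_prop, hSC, hA0] with x h1 h2 h3 hx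
    exact ⟨(h1 hx).1, (h1 hx).2.1, (h1 hx).2.2.1, fun t ht => h2 hx t ht, h3 hx⟩
  -- measurability of compositions
  have hcomp : ∀ (φ : EuclideanSpace ℝ (Fin n) → ℝ), AEMeasurable φ (volume.restrict Ω) →
      (∀ x, 0 ≤ φ x) →
      AEMeasurable (fun x => ENNReal.ofReal (G x (φ x))) (volume.restrict Ω) ∧
        AEMeasurable (fun x => G x (φ x)) (volume.restrict Ω) :=
    fun φ hφ hφ0 => PWaux.aemeas_comp hG.meas hPW hφ hφ0
  -- general modular bound
  have hmod : ∀ (f : EuclideanSpace ℝ (Fin n) → ℝ), AEMeasurable f (volume.restrict Ω) →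
      IntegrableOn (fun x => G x |f x|) Ω →
      ∀ l : ℝ, 1 ≤ l → luxNorm Ω G f < l →
      ∫⁻ x in Ω, ENNReal.ofReal (G x (|f x| / l)) ≤ 1 := by
    intro f hf hfint l hl1 hll
    have hl0 : (0:ℝ) < l := lt_of_lt_of_le one_pos hl1
    set S : Set ℝ := {l' : ℝ | 0 < l' ∧ ∫⁻ x in Ω, ENNReal.ofReal (G x (|f x| / l')) ≤ 1}
      with hSdef
    have hGnn : ∀ᵐ x ∂(volume.restrict Ω), 0 ≤ G x |f x| :=
      hPW.mono fun x hx => hx.G_nonneg (abs_nonneg _)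
    have hI0 : 0 ≤ ∫ x in Ω, G x |f x| := integral_nonneg_of_ae hGnn
    set I : ℝ := ∫ x in Ω, G x |f x| with hIdef
    have hSne : S.Nonempty := by
      refine ⟨max 1 (1 + I), lt_of_lt_of_le one_pos (le_max_left _ _), ?_⟩
      set l₀ : ℝ := max 1 (1 + I) with hl₀def
      have hl₀1 : (1:ℝ) ≤ l₀ := le_max_left _ _
      have hl₀0 : (0:ℝ) < l₀ := by linarith
      have hpt : ∀ᵐ x ∂(volume.restrict Ω), ENNReal.ofReal (G x (|f x| / l₀)) ≤
          ENNReal.ofReal (G x |f x|) / ENNReal.ofReal l₀ := by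
        filter_upwards [hPW] with x hx
        have := hx.G_scale_down hl₀1 (abs_nonneg (f x))
        calc ENNReal.ofReal (G x (|f x| / l₀)) ≤ ENNReal.ofReal (G x |f x| / l₀) :=
              ENNReal.ofReal_le_ofReal this
          _ = ENNReal.ofReal (G x |f x|) / ENNReal.ofReal l₀ :=
              ENNReal.ofReal_div_of_pos hl₀0
      calc ∫⁻ x in Ω, ENNReal.ofReal (G x (|f x| / l₀))
          ≤ ∫⁻ x in Ω, ENNReal.ofReal (G x |f x|) / ENNReal.ofReal l₀ :=
            lintegral_mono_ae hpt
        _ = (∫⁻ x in Ω, ENNReal.ofReal (G x |f x|)) / ENNReal.ofReal l₀ := by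
            simp only [div_eq_mul_inv]
            exact lintegral_mul_const'' _ (hcomp (fun x => |f x|) (PWaux.aemeasurable_abs hf)
              (fun x => abs_nonneg _)).1
        _ = ENNReal.ofReal I / ENNReal.ofReal l₀ := by
            rw [ofReal_integral_eq_lintegral_ofReal hfint hGnn]
        _ ≤ ENNReal.ofReal l₀ / ENNReal.ofReal l₀ := by
            apply ENNReal.div_le_div_right
            apply ENNReal.ofReal_le_ofReal
            calc I ≤ 1 + I := by linarith
              _ ≤ l₀ := le_max_right _ _
        _ = 1 := ENNReal.div_self (by simp [hl₀0]) ENNReal.ofReal_ne_top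
    have hSbdd : BddBelow S := ⟨0, fun x hx => hx.1.le⟩
    have hlux : luxNorm Ω G f = sInf S := rfl
    rw [hlux] at hll
    obtain ⟨l₀, hl₀S, hl₀lt⟩ := (csInf_lt_iff hSbdd hSne).mp hll
    -- monotonicity of the modular
    have hptm : ∀ᵐ x ∂(volume.restrict Ω), ENNReal.ofReal (G x (|f x| / l)) ≤
        ENNReal.ofReal (G x (|f x| / l₀)) := by
      filter_upwards [hPW] with x hx
      apply ENNReal.ofReal_le_ofReal
      apply hx.G_mono (div_nonneg (abs_nonneg _) hl0.le)
      exact div_le_div_of_nonneg_left (abs_nonneg _) hl₀S.1 hl₀lt.le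
    exact le_trans (lintegral_mono_ae hptm) hl₀S.2
  -- the uniform bound on the norms
  set M : ℝ := sSup (Set.range fun i => luxNorm Ω G (u i)) with hMdef
  have hM : ∀ i, luxNorm Ω G (u i) ≤ M := fun i => le_csSup hbdd ⟨i, rfl⟩
  set lam : ℝ := max M 0 + 1 with hlamdef
  have hlam1 : (1:ℝ) ≤ lam := by
    have : (0:ℝ) ≤ max M 0 := le_max_right _ _
    linarith
  have hlam0 : (0:ℝ) < lam := by linarith
  have hkey : ∀ i, ∫⁻ x in Ω, ENNReal.ofReal (G x (|u i x| / lam)) ≤ 1 := by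
    intro i
    apply hmod (u i) (hu i).1 (hu i).2 lam hlam1
    calc luxNorm Ω G (u i) ≤ M := hM i
      _ ≤ max M 0 := le_max_left _ _
      _ < lam := by rw [hlamdef]; linarith
  -- v is a.e. measurable
  have hvmeas : AEMeasurable v (volume.restrict Ω) :=
    aemeasurable_of_tendsto_metrizable_ae' (fun i => (hu i).1) hae
  -- Fatou
  have hvmod : ∫⁻ x in Ω, ENNReal.ofReal (G x (|v x| / lam)) ≤ 1 := by
    have hlim_ae : ∀ᵐ x ∂(volume.restrict Ω),
        Tendsto (fun i => ENNReal.ofReal (G x (|u i x| / lam))) atTop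
          (nhds (ENNReal.ofReal (G x (|v x| / lam)))) := by
      filter_upwards [hPW, hae] with x hx hxc
      have h1 : Tendsto (fun i => |u i x| / lam) atTop (nhds (|v x| / lam)) :=
        (hxc.abs).div_const lam
      exact (ENNReal.continuous_ofReal.tendsto _).comp
        (hx.G_cont (fun i => div_nonneg (abs_nonneg _) hlam0.le)
          (div_nonneg (abs_nonneg _) hlam0.le) h1)
    calc ∫⁻ x in Ω, ENNReal.ofReal (G x (|v x| / lam))
        = ∫⁻ x in Ω, liminf (fun i => ENNReal.ofReal (G x (|u i x| / lam))) atTop := by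
          apply lintegral_congr_ae
          filter_upwards [hlim_ae] with x hx
          exact hx.liminf_eq.symm
      _ ≤ liminf (fun i => ∫⁻ x in Ω, ENNReal.ofReal (G x (|u i x| / lam))) atTop := by
          apply lintegral_liminf_le'
          intro i
          exact (hcomp (fun x => |u i x| / lam)
            ((PWaux.aemeasurable_abs (hu i).1).div_const lam) (fun x => div_nonneg (abs_nonneg _) hlam0.le)).1
      _ ≤ (1:ℝ≥0∞) :=
          liminf_le_of_frequently_le' (Frequently.of_forall hkey)
  -- v ∈ L^G
  have hvint : IntegrableOn (fun x => G x |v x|) Ω := by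
    constructor
    · exact (hcomp (fun x => |v x|) (PWaux.aemeasurable_abs hvmeas) (fun x => abs_nonneg _)).2.aestronglyMeasurable
    · rw [hasFiniteIntegral_iff_ofReal
        (hPW.mono fun x hx => hx.G_nonneg (abs_nonneg _))]
      have hdbl : ∀ᵐ x ∂(volume.restrict Ω), ENNReal.ofReal (G x |v x|) ≤
          ENNReal.ofReal (PWaux.Ddbl gu lam) * ENNReal.ofReal (G x (|v x| / lam)) := by
        filter_upwards [hPW] with x hx
        have h1 : G x |v x| ≤ PWaux.Ddbl gu lam * G x (|v x| / lam) := by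
          have := hx.dbl hgu0 hlam1 (div_nonneg (abs_nonneg (v x)) hlam0.le)
          have he : lam * (|v x| / lam) = |v x| := by field_simp
          rwa [he] at this
        calc ENNReal.ofReal (G x |v x|)
            ≤ ENNReal.ofReal (PWaux.Ddbl gu lam * G x (|v x| / lam)) :=
              ENNReal.ofReal_le_ofReal h1
          _ = ENNReal.ofReal (PWaux.Ddbl gu lam) * ENNReal.ofReal (G x (|v x| / lam)) :=
              ENNReal.ofReal_mul (PWaux.Ddbl_nonneg gu lam)
      calc ∫⁻ x in Ω, ENNReal.ofReal (G x |v x|)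
          ≤ ∫⁻ x in Ω, ENNReal.ofReal (PWaux.Ddbl gu lam) *
              ENNReal.ofReal (G x (|v x| / lam)) := lintegral_mono_ae hdbl
        _ = ENNReal.ofReal (PWaux.Ddbl gu lam) *
              ∫⁻ x in Ω, ENNReal.ofReal (G x (|v x| / lam)) :=
            lintegral_const_mul'' _ (hcomp (fun x => |v x| / lam)
              (((PWaux.aemeasurable_abs hvmeas)).div_const lam) (fun x => div_nonneg (abs_nonneg _) hlam0.le)).1
        _ ≤ ENNReal.ofReal (PWaux.Ddbl gu lam) * 1 := by
            exact mul_le_mul_right hvmod _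
        _ < ⊤ := by
            rw [mul_one]; exact ENNReal.ofReal_lt_top
  have hMemv : MemLG Ω G v := ⟨hvmeas, hvint⟩
  refine ⟨hMemv, ?_⟩
  intro w hw
  obtain ⟨hwmeas, hwint⟩ := hw
  have hconjPhi : ∀ (x : EuclideanSpace ℝ (Fin n)) (s : ℝ),
      conjPhi G x s = sSup (PWaux.Sset (G x) s) := fun x s => rfl
  have hconj_nonneg : ∀ᵐ x ∂(volume.restrict Ω), 0 ≤ conjPhi G x |w x| := by
    filter_upwards [hPW] with x hx
    rw [hconjPhi]; exact hx.conj_nonneg _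
  -- w is integrable
  have hwint1 : Integrable w (volume.restrict Ω) := by
    apply Integrable.mono' (g := fun x => c₀ + conjPhi G x |w x|)
      ((integrable_const c₀).add hwint) hwmeas.aestronglyMeasurable
    filter_upwards [hPW] with x hx
    have hy := hx.young hg₀ hgu hc₀ (zero_le_one) (abs_nonneg (w x))
    rw [← hconjPhi] at hy
    have hG1 : G x 1 ≤ c₀ := hx.a0.2
    calc ‖w x‖ = 1 * |w x| := by rw [Real.norm_eq_abs, one_mul]
      _ ≤ G x 1 + conjPhi G x |w x| := hy
      _ ≤ c₀ + conjPhi G x |w x| := by linarith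
  -- products with w are integrable
  have hprod : ∀ (f : EuclideanSpace ℝ (Fin n) → ℝ), AEMeasurable f (volume.restrict Ω) →
      IntegrableOn (fun x => G x |f x|) Ω →
      Integrable (fun x => f x * w x) (volume.restrict Ω) := by
    intro f hf hfint
    apply Integrable.mono' (g := fun x => G x |f x| + conjPhi G x |w x|)
      (hfint.add hwint) (hf.mul hwmeas).aestronglyMeasurable
    filter_upwards [hPW] with x hx
    have hy := hx.young hg₀ hgu hc₀ (abs_nonneg (f x)) (abs_nonneg (w x))
    rw [← hconjPhi] at hy
    calc ‖f x * w x‖ = |f x| * |w x| := by rw [Real.norm_eq_abs, abs_mul]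
      _ ≤ G x |f x| + conjPhi G x |w x| := hy
  have hintu : ∀ i, Integrable (fun x => u i x * w x) (volume.restrict Ω) :=
    fun i => hprod _ (hu i).1 (hu i).2
  have hintv : Integrable (fun x => v x * w x) (volume.restrict Ω) := hprod _ hvmeas hvint
  have hintf : ∀ i, Integrable (fun x => (u i x - v x) * w x) (volume.restrict Ω) := by
    intro i
    have := (hintu i).sub hintv
    apply this.congr
    filter_upwards with x
    simp only [Pi.sub_apply]
    ring
  -- modular bound for the differences
  set Lam : ℝ := 2 * lam with hLamdef
  have hLam1 : (1:ℝ) ≤ Lam := by rw [hLamdef]; linarith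
  have hLam0 : (0:ℝ) < Lam := by linarith
  clear_value M lam Lam
  have hmodf : ∀ i, ∫⁻ x in Ω, ENNReal.ofReal (G x (|u i x - v x| / Lam)) ≤ 2 := by
    intro i
    have hpt : ∀ᵐ x ∂(volume.restrict Ω), ENNReal.ofReal (G x (|u i x - v x| / Lam)) ≤
        ENNReal.ofReal (G x (|u i x| / lam)) + ENNReal.ofReal (G x (|v x| / lam)) := by
      filter_upwards [hPW] with x hx
      have h2 : G x (|u i x - v x| / Lam) ≤ G x (|u i x| / lam) + G x (|v x| / lam) := by
        have habs : |u i x - v x| ≤ |u i x| + |v x| := abs_sub _ _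
        rcases le_total (|u i x|) (|v x|) with hle | hle
        · have h1 : |u i x - v x| / Lam ≤ |v x| / lam := by
            rw [div_le_div_iff₀ hLam0 hlam0, hLamdef]
            nlinarith [abs_nonneg (v x)]
          calc G x (|u i x - v x| / Lam) ≤ G x (|v x| / lam) :=
                hx.G_mono (div_nonneg (abs_nonneg _) hLam0.le) h1
            _ ≤ G x (|u i x| / lam) + G x (|v x| / lam) := by
                linarith [hx.G_nonneg (div_nonneg (abs_nonneg (u i x)) hlam0.le)]
        · have h1 : |u i x - v x| / Lam ≤ |u i x| / lam := by
            rw [div_le_div_iff₀ hLam0 hlam0, hLamdef]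
            nlinarith [abs_nonneg (u i x)]
          calc G x (|u i x - v x| / Lam) ≤ G x (|u i x| / lam) :=
                hx.G_mono (div_nonneg (abs_nonneg _) hLam0.le) h1
            _ ≤ G x (|u i x| / lam) + G x (|v x| / lam) := by
                linarith [hx.G_nonneg (div_nonneg (abs_nonneg (v x)) hlam0.le)]
      calc ENNReal.ofReal (G x (|u i x - v x| / Lam))
          ≤ ENNReal.ofReal (G x (|u i x| / lam) + G x (|v x| / lam)) :=
            ENNReal.ofReal_le_ofReal h2
        _ ≤ _ := ENNReal.ofReal_add_le
    calc ∫⁻ x in Ω, ENNReal.ofReal (G x (|u i x - v x| / Lam))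
        ≤ ∫⁻ x in Ω, (ENNReal.ofReal (G x (|u i x| / lam))
            + ENNReal.ofReal (G x (|v x| / lam))) := lintegral_mono_ae hpt
      _ = (∫⁻ x in Ω, ENNReal.ofReal (G x (|u i x| / lam)))
            + ∫⁻ x in Ω, ENNReal.ofReal (G x (|v x| / lam)) :=
          lintegral_add_left' ((hcomp (fun x => |u i x| / lam)
            ((PWaux.aemeasurable_abs (hu i).1).div_const lam)
            (fun x => div_nonneg (abs_nonneg _) hlam0.le)).1) _
      _ ≤ 1 + 1 := add_le_add (hkey i) hvmod
      _ = 2 := by norm_num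
  -- reduce to convergence of the error integrals
  have hsub : ∀ i, (∫ x in Ω, u i x * w x) =
      (∫ x in Ω, (u i x - v x) * w x) + ∫ x in Ω, v x * w x := by
    intro i
    rw [← integral_add (hintf i) hintv]
    congr 1
    funext x
    ring
  have hTgoal : Tendsto (fun i => ∫ x in Ω, (u i x - v x) * w x) atTop (nhds 0) := by
    set T : ℕ → ℝ := fun i => ∫ x in Ω, |(u i x - v x) * w x| with hTdef
    have hT0 : ∀ i, 0 ≤ T i := fun i => integral_nonneg fun x => abs_nonneg _
    have hTbound : ∀ i, ‖∫ x in Ω, (u i x - v x) * w x‖ ≤ T i := by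
      intro i
      calc ‖∫ x in Ω, (u i x - v x) * w x‖ ≤ ∫ x in Ω, ‖(u i x - v x) * w x‖ :=
          norm_integral_le_integral_norm _
        _ = T i := by rw [hTdef]; simp only [Real.norm_eq_abs]
    apply squeeze_zero_norm hTbound
    refine tendsto_order.2 ⟨fun a ha => Eventually.of_forall fun i =>
      lt_of_lt_of_le ha (hT0 i), fun ε hε => ?_⟩
    set δ : ℝ := min 1 (ε / (6 * Lam)) with hδdef
    have hδ0 : 0 < δ := lt_min one_pos (by positivity)
    have hδ1 : δ ≤ 1 := min_le_left _ _
    have hδε : 2 * Lam * δ ≤ ε / 3 := by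
      have h1 : δ ≤ ε / (6 * Lam) := min_le_right _ _
      calc 2 * Lam * δ ≤ 2 * Lam * (ε / (6 * Lam)) := by nlinarith
        _ = ε / 3 := by field_simp; ring
    have hδne : δ ≠ 0 := ne_of_gt hδ0
    clear_value δ
    set K : ℝ := PWaux.Kconj g₀ (1/δ) with hKdef
    have hK0 : 0 < K := PWaux.Kconj_pos hg₀ _
    clear_value K
    have hJfin : (∫⁻ x in Ω, ENNReal.ofReal (conjPhi G x |w x|)) ≠ ⊤ := by
      rw [← ofReal_integral_eq_lintegral_ofReal hwint hconj_nonneg]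
      exact ENNReal.ofReal_ne_top
    have hε'ne : ENNReal.ofReal (ε / (6 * Lam * K)) ≠ 0 :=
      ne_of_gt (ENNReal.ofReal_pos.mpr (by positivity))
    obtain ⟨η, hη0, hη⟩ := exists_pos_setLIntegral_lt_of_measure_lt
      (μ := volume.restrict Ω) hJfin hε'ne
    obtain ⟨ρ, hρnn, hρ1, hρ2⟩ := ENNReal.lt_iff_exists_real_btwn.mp hη0
    have hρpos : 0 < ρ := ENNReal.ofReal_pos.mp hρ1
    -- Egorov
    have haemk : ∀ᵐ x ∂(volume.restrict Ω),
        Tendsto (fun i => ((hu i).1.mk (u i)) x) atTop (nhds (hvmeas.mk v x)) := by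
      have hh : ∀ᵐ x ∂(volume.restrict Ω), ∀ i, u i x = (hu i).1.mk (u i) x :=
        ae_all_iff.2 fun i => (hu i).1.ae_eq_mk
      filter_upwards [hae, hvmeas.ae_eq_mk, hh] with x h1 h2 h3
      rw [← h2]
      exact h1.congr fun i => (h3 i)
    obtain ⟨t, htm, htμ, hunif⟩ := MeasureTheory.tendstoUniformlyOn_of_ae_tendsto'
      (fun i => ((hu i).1.measurable_mk).stronglyMeasurable)
      ((hvmeas.measurable_mk).stronglyMeasurable) haemk hρpos
    have htμ' : (volume.restrict Ω) t < η := lt_of_le_of_lt htμ hρ2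
    set wΩ : ℝ := ∫ x in Ω, |w x| with hwΩdef
    have hwΩ0 : 0 ≤ wΩ := integral_nonneg fun x => abs_nonneg _
    set σ : ℝ := ε / (3 * (wΩ + 1)) with hσdef
    have hσ0 : 0 < σ := by rw [hσdef]; exact div_pos hε (by nlinarith)
    clear_value σ wΩ
    have hev := (Metric.tendstoUniformlyOn_iff.mp hunif) σ hσ0
    filter_upwards [hev] with i hi
    have hTsplit : T i = (∫ x in t, |(u i x - v x) * w x| ∂(volume.restrict Ω))
        + ∫ x in tᶜ, |(u i x - v x) * w x| ∂(volume.restrict Ω) := by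
      rw [hTdef]
      exact (integral_add_compl htm ((hintf i).abs)).symm
    -- bound outside the bad set
    have hA : ∫ x in tᶜ, |(u i x - v x) * w x| ∂(volume.restrict Ω) ≤ σ * wΩ := by
      have hle : ∀ᵐ x ∂((volume.restrict Ω).restrict tᶜ),
          |(u i x - v x) * w x| ≤ σ * |w x| := by
        have h1 : ∀ᵐ x ∂((volume.restrict Ω).restrict tᶜ), x ∈ tᶜ := ae_restrict_mem htm.compl
        have h2 := ae_restrict_of_ae (s := tᶜ) ((hu i).1.ae_eq_mk)
        have h3 := ae_restrict_of_ae (s := tᶜ) (hvmeas.ae_eq_mk)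
        filter_upwards [h1, h2, h3] with x hx hx2 hx3
        rw [abs_mul]
        apply mul_le_mul_of_nonneg_right _ (abs_nonneg (w x))
        have hd := hi x hx
        rw [Real.dist_eq] at hd
        have he : |u i x - v x| = |(hu i).1.mk (u i) x - hvmeas.mk v x| := by rw [hx2, hx3]
        rw [he, abs_sub_comm]
        exact hd.le
      calc ∫ x in tᶜ, |(u i x - v x) * w x| ∂(volume.restrict Ω)
          ≤ ∫ x in tᶜ, σ * |w x| ∂(volume.restrict Ω) :=
            integral_mono_ae ((hintf i).abs.restrict) ((hwint1.abs.restrict).const_mul σ) hle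
        _ = σ * ∫ x in tᶜ, |w x| ∂(volume.restrict Ω) := integral_const_mul σ _
        _ ≤ σ * wΩ := by
            apply mul_le_mul_of_nonneg_left _ hσ0.le
            rw [hwΩdef]
            exact setIntegral_le_integral hwint1.abs (Eventually.of_forall fun x => abs_nonneg _)
    -- bound on the bad set
    have hBnn : (0:ℝ) ≤ 2 * Lam * δ + ε / 6 := by positivity
    have hB : ∫ x in t, |(u i x - v x) * w x| ∂(volume.restrict Ω) ≤ 2 * Lam * δ + ε / 6 := by
      have hreal : ∀ᵐ x ∂(volume.restrict Ω), |(u i x - v x) * w x| ≤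
          Lam * δ * G x (|u i x - v x| / Lam) + Lam * K * conjPhi G x |w x| := by
        filter_upwards [hPW] with x hx
        set a : ℝ := |u i x - v x| / Lam with hadef
        have ha0 : 0 ≤ a := div_nonneg (abs_nonneg _) hLam0.le
        have hb0 : 0 ≤ |w x| := abs_nonneg _
        have hinvδ : 1 ≤ 1/δ := by rw [le_div_iff₀ hδ0]; linarith
        have hy := hx.young hg₀ hgu hc₀ (mul_nonneg hδ0.le ha0)
          (mul_nonneg (by positivity : (0:ℝ) ≤ 1/δ) hb0)
        have he1 : δ * a * (1/δ * |w x|) = a * |w x| := by field_simp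
        have hgs : G x (δ * a) ≤ δ * G x a := by
          have hsd := hx.G_scale_down hinvδ ha0
          have he2 : a / (1/δ) = δ * a := by field_simp
          have he3 : G x a / (1/δ) = δ * G x a := by field_simp
          rw [he2, he3] at hsd
          exact hsd
        have hcs : sSup (PWaux.Sset (G x) (1/δ * |w x|)) ≤ K * conjPhi G x |w x| := by
          rw [hconjPhi, hKdef]
          exact hx.conj_scale hg₀ hgu hc₀ hinvδ hb0
        have hab : a * |w x| ≤ δ * G x a + K * conjPhi G x |w x| := by
          rw [← he1]
          refine le_trans hy ?_
          have := hconjPhi x (1/δ * |w x|)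
          linarith [hgs, hcs]
        calc |(u i x - v x) * w x| = Lam * (a * |w x|) := by
              rw [abs_mul, hadef]; field_simp
          _ ≤ Lam * (δ * G x a + K * conjPhi G x |w x|) :=
              mul_le_mul_of_nonneg_left hab hLam0.le
          _ = Lam * δ * G x a + Lam * K * conjPhi G x |w x| := by ring
      have hptB : ∀ᵐ x ∂(volume.restrict Ω), ENNReal.ofReal |(u i x - v x) * w x| ≤
          ENNReal.ofReal (Lam * δ) * ENNReal.ofReal (G x (|u i x - v x| / Lam))
            + ENNReal.ofReal (Lam * K) * ENNReal.ofReal (conjPhi G x |w x|) := by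
        filter_upwards [hreal] with x hx
        calc ENNReal.ofReal |(u i x - v x) * w x|
            ≤ ENNReal.ofReal (Lam * δ * G x (|u i x - v x| / Lam)
                + Lam * K * conjPhi G x |w x|) := ENNReal.ofReal_le_ofReal hx
          _ ≤ ENNReal.ofReal (Lam * δ * G x (|u i x - v x| / Lam))
              + ENNReal.ofReal (Lam * K * conjPhi G x |w x|) := ENNReal.ofReal_add_le
          _ = _ := by
              rw [ENNReal.ofReal_mul (by positivity : (0:ℝ) ≤ Lam * δ),
                ENNReal.ofReal_mul (by positivity : (0:ℝ) ≤ Lam * K)]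
      have hmeasA := (hcomp (fun x => |u i x - v x| / Lam)
        ((PWaux.aemeasurable_abs ((hu i).1.sub hvmeas)).div_const Lam)
        (fun x => div_nonneg (abs_nonneg _) hLam0.le)).1
      have hlB : ∫⁻ x in t, ENNReal.ofReal |(u i x - v x) * w x| ∂(volume.restrict Ω)
          ≤ ENNReal.ofReal (2 * Lam * δ + ε / 6) := by
        calc ∫⁻ x in t, ENNReal.ofReal |(u i x - v x) * w x| ∂(volume.restrict Ω)
            ≤ ∫⁻ x in t, (ENNReal.ofReal (Lam * δ)
                  * ENNReal.ofReal (G x (|u i x - v x| / Lam))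
                + ENNReal.ofReal (Lam * K) * ENNReal.ofReal (conjPhi G x |w x|))
                  ∂(volume.restrict Ω) := lintegral_mono_ae (ae_restrict_of_ae hptB)
          _ = (∫⁻ x in t, ENNReal.ofReal (Lam * δ)
                  * ENNReal.ofReal (G x (|u i x - v x| / Lam)) ∂(volume.restrict Ω))
              + ∫⁻ x in t, ENNReal.ofReal (Lam * K)
                  * ENNReal.ofReal (conjPhi G x |w x|) ∂(volume.restrict Ω) :=
              lintegral_add_left' ((hmeasA.const_mul _).restrict) _
          _ = ENNReal.ofReal (Lam * δ)
                * (∫⁻ x in t, ENNReal.ofReal (G x (|u i x - v x| / Lam)) ∂(volume.restrict Ω))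
              + ENNReal.ofReal (Lam * K)
                * ∫⁻ x in t, ENNReal.ofReal (conjPhi G x |w x|) ∂(volume.restrict Ω) := by
              rw [lintegral_const_mul' _ _ ENNReal.ofReal_ne_top,
                lintegral_const_mul' _ _ ENNReal.ofReal_ne_top]
          _ ≤ ENNReal.ofReal (Lam * δ) * 2
              + ENNReal.ofReal (Lam * K) * ENNReal.ofReal (ε / (6 * Lam * K)) := by
              apply add_le_add
              · apply mul_le_mul_right
                calc ∫⁻ x in t, ENNReal.ofReal (G x (|u i x - v x| / Lam)) ∂(volume.restrict Ω)
                    ≤ ∫⁻ x in Ω, ENNReal.ofReal (G x (|u i x - v x| / Lam)) :=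
                      lintegral_mono' Measure.restrict_le_self (le_refl _)
                  _ ≤ 2 := hmodf i
              · exact mul_le_mul_right (le_of_lt (hη t htμ')) _
          _ ≤ ENNReal.ofReal (2 * Lam * δ) + ENNReal.ofReal (ε / 6) := by
              apply add_le_add
              · have : (2:ℝ≥0∞) = ENNReal.ofReal (2:ℝ) := by norm_num
                rw [this, ← ENNReal.ofReal_mul (by positivity : (0:ℝ) ≤ Lam * δ)]
                exact ENNReal.ofReal_le_ofReal (by linarith)
              · rw [← ENNReal.ofReal_mul (by positivity : (0:ℝ) ≤ Lam * K)]
                apply ENNReal.ofReal_le_ofReal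
                have hLne : Lam ≠ 0 := ne_of_gt hLam0
                have hKne : K ≠ 0 := ne_of_gt hK0
                have he : Lam * K * (ε / (6 * Lam * K)) = ε / 6 := by
                  field_simp
                exact le_of_eq he
          _ = ENNReal.ofReal (2 * Lam * δ + ε / 6) :=
              (ENNReal.ofReal_add (by positivity) (by positivity)).symm
      have heq : ∫ x in t, |(u i x - v x) * w x| ∂(volume.restrict Ω)
          = (∫⁻ x in t, ENNReal.ofReal |(u i x - v x) * w x| ∂(volume.restrict Ω)).toReal := by
        rw [integral_eq_lintegral_of_nonneg_ae (Eventually.of_forall fun x => abs_nonneg _)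
          ((hintf i).abs.restrict.aestronglyMeasurable)]
      rw [heq]
      exact ENNReal.toReal_le_of_le_ofReal hBnn hlB
    have hσw : σ * wΩ < ε / 3 := by
      have he : σ * (wΩ + 1) = ε / 3 := by rw [hσdef]; field_simp
      nlinarith
    calc T i = _ + _ := hTsplit
      _ ≤ (2 * Lam * δ + ε / 6) + σ * wΩ := add_le_add hB hA
      _ < ε := by linarith
  have : (fun i => ∫ x in Ω, u i x * w x) =
      fun i => (∫ x in Ω, (u i x - v x) * w x) + ∫ x in Ω, v x * w x := funext hsub
  rw [this]
  simpa using hTgoal.add_const (∫ x in Ω, v x * w x)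

end
end
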